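/- Let G be a connected graph of order n and diameter D, and suppose removing an edge uv disconnects G into components H₁ (containing v, of order k) and H₂ (containing u), with μ(H₁) ≥ μ(H₂). If x is a unit Perron eigenvector of H₁, then x_v ≥ μ(H₁)^{−D} · k^{−1/2}. -/
import Mathlib

open Classical in
noncomputable def adjMat {V : Type*} [Fintype V] (G : SimpleGraph V) :
    Matrix V V ℝ :=
  Matrix.of fun i j => if G.Adj i j then 1 else 0

def IsAdjEigenvalue {V : Type*} [Fintype V] (A : Matrix V V ℝ) (μ : ℝ) : Prop :=
  ∃ x : V → ℝ, x ≠ 0 ∧ A.mulVec x = μ • x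

def IsMaxAdjEigenvalue {V : Type*} [Fintype V] (A : Matrix V V ℝ) (μ : ℝ) : Prop :=
  IsAdjEigenvalue A μ ∧ ∀ ν, IsAdjEigenvalue A ν → ν ≤ μ

def IsMinAdjEigenvalue {V : Type*} [Fintype V] (A : Matrix V V ℝ) (μ : ℝ) : Prop :=
  IsAdjEigenvalue A μ ∧ ∀ ν, IsAdjEigenvalue A ν → μ ≤ ν

/-- Push a walk ending at `v` into the induced subgraph on `S`. -/
lemma walk_to_induced {n : ℕ} (G : SimpleGraph (Fin n)) (u v : Fin n)
    (S : Finset (Fin n)) (hv : v ∈ S) (hu : u ∉ S)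
    (hsplit : ∀ a b, G.Adj a b → ¬(a = u ∧ b = v) → ¬(a = v ∧ b = u) →
      (a ∈ S ↔ b ∈ S)) :
    ∀ (m : ℕ) (w : Fin n) (hw : w ∈ S) (p : G.Walk w v), p.length ≤ m →
      ∃ q : (G.induce (↑S : Set (Fin n))).Walk ⟨w, by simpa using hw⟩ ⟨v, by simpa using hv⟩,
        q.length ≤ p.length := by
  intro m
  induction m with
  | zero =>
    intro w hw p hp
    cases p with
    | nil => exact ⟨SimpleGraph.Walk.nil, Nat.zero_le _⟩
    | cons h p' => simp at hp
  | succ m ih =>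
    intro w hw p hp
    by_cases hwv : w = v
    · subst hwv
      exact ⟨SimpleGraph.Walk.nil, Nat.zero_le _⟩
    · cases p with
      | nil => exact absurd rfl hwv
      | @cons _ y _ h p' =>
        have hwu : w ≠ u := fun e => hu (e ▸ hw)
        have hy : y ∈ S := (hsplit w y h (by simp [hwu]) (by simp [hwv])).mp hw
        have hlen : p'.length ≤ m := by
          simp only [SimpleGraph.Walk.length_cons] at hp; omega
        obtain ⟨q, hq⟩ := ih y hy p' hlen
        refine ⟨SimpleGraph.Walk.cons ?_ q, ?_⟩
        · simpa using h
        · simp only [SimpleGraph.Walk.length_cons]; omega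

/-- Along a walk, the eigenvector entries decay at most geometrically. -/
lemma value_along {V : Type*} (H : SimpleGraph V) (μ : ℝ) (hμ : 0 ≤ μ)
    (x : V → ℝ)
    (hstep : ∀ a b : V, H.Adj a b → x b ≤ μ * x a) :
    ∀ (a b : V) (q : H.Walk a b), x a ≤ μ ^ q.length * x b := by
  intro a b q
  induction q with
  | nil => simp
  | @cons a c b h q ih =>
    have h1 : x a ≤ μ * x c := hstep c a h.symm
    calc x a ≤ μ * x c := h1
      _ ≤ μ * (μ ^ q.length * x b) := by
          exact mul_le_mul_of_nonneg_left ih hμ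
      _ = μ ^ (SimpleGraph.Walk.cons h q).length * x b := by
          simp only [SimpleGraph.Walk.length_cons]; ring

theorem stmt18 {n : ℕ} (G : SimpleGraph (Fin n)) (hG : G.Connected)
    (D : ℕ) (hD1 : ∀ a b, G.dist a b ≤ D) (hD2 : ∃ a b, G.dist a b = D)
    (u v : Fin n) (huv : G.Adj u v)
    (S : Finset (Fin n)) (hv : v ∈ S) (hu : u ∉ S)
    -- the edge `uv` is the only edge of `G` joining `S` to its complement
    (hsplit : ∀ a b, G.Adj a b → ¬(a = u ∧ b = v) → ¬(a = v ∧ b = u) →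
      (a ∈ S ↔ b ∈ S))
    (k : ℕ) (hk : S.card = k)
    (μ₁ μ₂ : ℝ)
    (hmax₁ : IsMaxAdjEigenvalue (adjMat (G.induce (↑S : Set (Fin n)))) μ₁)
    (hmax₂ : IsMaxAdjEigenvalue (adjMat (G.induce ((↑S : Set (Fin n))ᶜ))) μ₂)
    (hle : μ₂ ≤ μ₁)
    (x : (↑S : Set (Fin n)) → ℝ) (hxpos : ∀ i, 0 < x i) (hunit : ∑ i, x i ^ 2 = 1)
    (heig : (adjMat (G.induce (↑S : Set (Fin n)))).mulVec x = μ₁ • x) :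
    x ⟨v, by simpa using hv⟩ ≥ μ₁ ^ (-(D : ℤ)) / Real.sqrt k := by
  classical
  set vS : (↑S : Set (Fin n)) := ⟨v, by simpa using hv⟩ with hvS
  have hxv : (0:ℝ) < x vS := hxpos _
  have hkcard : Fintype.card (↑S : Set (Fin n)) = k := by
    rw [← hk]; exact Fintype.card_coe S
  have hk1 : 1 ≤ k := by
    have : 0 < S.card := Finset.card_pos.mpr ⟨v, hv⟩
    omega
  -- the eigen equation, pointwise
  have heq : ∀ a : (↑S : Set (Fin n)),
      ∑ j, (if (G.induce (↑S : Set (Fin n))).Adj a j then (1:ℝ) else 0) * x j = μ₁ * x a := by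
    intro a
    have := congrFun heig a
    simpa [Matrix.mulVec, dotProduct, adjMat] using this
  -- step inequality
  have hstep : ∀ a b : (↑S : Set (Fin n)), (G.induce (↑S : Set (Fin n))).Adj a b →
      x b ≤ μ₁ * x a := by
    intro a b hab
    rw [← heq a]
    calc x b = (if (G.induce (↑S : Set (Fin n))).Adj a b then (1:ℝ) else 0) * x b := by
          rw [if_pos hab, one_mul]
      _ ≤ ∑ j, (if (G.induce (↑S : Set (Fin n))).Adj a j then (1:ℝ) else 0) * x j := by
          apply Finset.single_le_sum (f := fun j =>
            (if (G.induce (↑S : Set (Fin n))).Adj a j then (1:ℝ) else 0) * x j)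
          · intro i _
            by_cases h : (G.induce (↑S : Set (Fin n))).Adj a i
            · rw [if_pos h, one_mul]; exact (hxpos i).le
            · rw [if_neg h, zero_mul]
          · exact Finset.mem_univ b
  by_cases hk2 : 2 ≤ k
  · -- main case: there is an edge inside S, so μ₁ ≥ 1
    obtain ⟨t, ht, htv⟩ : ∃ t ∈ S, t ≠ v := by
      have : 1 < S.card := by omega
      obtain ⟨t, ht, htv⟩ := Finset.exists_mem_ne this v
      exact ⟨t, ht, htv⟩
    -- t has a neighbor inside S
    have htu : t ≠ u := fun e => hu (e ▸ ht)
    obtain ⟨s₀, hts⟩ : ∃ s₀, G.Adj t s₀ := by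
      obtain ⟨p⟩ := hG t u
      cases p with
      | nil => exact absurd rfl htu
      | cons h _ => exact ⟨_, h⟩
    have hs₀ : s₀ ∈ S := (hsplit t s₀ hts (by simp [htu]) (by simp [htv])).mp ht
    have hadj : (G.induce (↑S : Set (Fin n))).Adj ⟨t, by simpa using ht⟩ ⟨s₀, by simpa using hs₀⟩ := by
      simpa using hts
    have h1 : x ⟨s₀, by simpa using hs₀⟩ ≤ μ₁ * x ⟨t, by simpa using ht⟩ := hstep _ _ hadj
    have h2 : x ⟨t, by simpa using ht⟩ ≤ μ₁ * x ⟨s₀, by simpa using hs₀⟩ := hstep _ _ hadj.symm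
    have hxt : (0:ℝ) < x ⟨t, by simpa using ht⟩ := hxpos _
    have hxs : (0:ℝ) < x ⟨s₀, by simpa using hs₀⟩ := hxpos _
    have hμpos : 0 < μ₁ := by nlinarith
    have hμ1 : 1 ≤ μ₁ := by nlinarith
    -- a coordinate with large entry
    obtain ⟨w, -, hw⟩ : ∃ w ∈ (Finset.univ : Finset (↑S : Set (Fin n))),
        (1:ℝ)/k ≤ x w ^ 2 := by
      apply Finset.exists_le_of_sum_le
      · have : Nonempty (↑S : Set (Fin n)) := ⟨vS⟩
        exact Finset.univ_nonempty
      · rw [hunit]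
        rw [Finset.sum_const]
        simp only [Finset.card_univ, hkcard, nsmul_eq_mul]
        rw [mul_one_div, div_self]
        positivity
    have hkpos : (0:ℝ) < k := by positivity
    have hsqrtk : (0:ℝ) < Real.sqrt k := Real.sqrt_pos.mpr hkpos
    have hxw : (Real.sqrt k)⁻¹ ≤ x w := by
      have h3 : Real.sqrt ((k:ℝ)⁻¹) ≤ Real.sqrt (x w ^ 2) := by
        apply Real.sqrt_le_sqrt
        rwa [inv_eq_one_div]
      rwa [Real.sqrt_sq (hxpos w).le, Real.sqrt_inv] at h3
    -- walk from w to v inside S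
    obtain ⟨p, hp⟩ := hG.exists_walk_length_eq_dist w.val v
    have hpD : p.length ≤ D := hp ▸ hD1 _ _
    have hwS : w.val ∈ S := by simpa using w.2
    obtain ⟨q, hq⟩ := walk_to_induced G u v S hv hu hsplit p.length w.val hwS p le_rfl
    have hval : x ⟨w.val, by simpa using hwS⟩ ≤ μ₁ ^ q.length * x vS :=
      value_along _ μ₁ hμpos.le x hstep _ _ q
    have hqD : q.length ≤ D := le_trans hq hpD
    have hpow : μ₁ ^ q.length ≤ μ₁ ^ D := pow_le_pow_right₀ hμ1 hqD
    have hcomb : (Real.sqrt k)⁻¹ ≤ μ₁ ^ D * x vS := by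
      have hxw' : x ⟨w.val, by simpa using hwS⟩ = x w := by
        congr 1
      calc (Real.sqrt k)⁻¹ ≤ x w := hxw
        _ = x ⟨w.val, by simpa using hwS⟩ := hxw'.symm
        _ ≤ μ₁ ^ q.length * x vS := hval
        _ ≤ μ₁ ^ D * x vS := mul_le_mul_of_nonneg_right hpow hxv.le
    have key : (1:ℝ) ≤ μ₁ ^ D * x vS * Real.sqrt k := by
      have h4 := mul_le_mul_of_nonneg_right hcomb hsqrtk.le
      rwa [inv_mul_cancel₀ hsqrtk.ne'] at h4
    have hpowpos : (0:ℝ) < μ₁ ^ D := pow_pos hμpos D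
    rw [ge_iff_le, zpow_neg, zpow_natCast, div_le_iff₀ hsqrtk, inv_eq_one_div,
      div_le_iff₀ hpowpos]
    calc (1:ℝ) ≤ μ₁ ^ D * x vS * Real.sqrt k := key
      _ = x vS * Real.sqrt k * μ₁ ^ D := by ring
  · -- k = 1 : S = {v}, μ₁ = 0
    have hk1' : k = 1 := by omega
    have hcard1 : Fintype.card (↑S : Set (Fin n)) = 1 := by rw [hkcard, hk1']
    have hall : ∀ j : (↑S : Set (Fin n)), j = vS := by
      have h1 := Fintype.card_le_one_iff.mp (le_of_eq hcard1)
      intro j; exact h1 j vS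
    have hμ0 : μ₁ = 0 := by
      have h2 := heq vS
      have h3 : ∑ j, (if (G.induce (↑S : Set (Fin n))).Adj vS j then (1:ℝ) else 0) * x j
          = 0 := by
        apply Finset.sum_eq_zero
        intro j _
        rw [hall j, if_neg (SimpleGraph.irrefl _), zero_mul]
      rw [h3] at h2
      rcases mul_eq_zero.mp h2.symm with h | h
      · exact h
      · exact absurd h hxv.ne'
    have hDpos : 0 < D := lt_of_lt_of_le (hG.pos_dist_of_ne huv.ne) (hD1 u v)
    rw [hμ0, zero_zpow _ (by omega), zero_div]
    exact hxv.le
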